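/- Let R be a finite type and let F be a collection of subsets of R that is upward closed (P ∈ F and P ⊆ Q implies Q ∈ F) and contains the full set R. Let M ∈ F be minimal with respect to inclusion. Then there exists a linear ordering r_1, …, r_n of the elements of R such that the greedy deletion procedure — start with P := R, and for i = 1, …, n, replace P by P \ {r_i} whenever P \ {r_i} ∈ F — terminates with exactly the set M. -/
import Mathlib


open Classical in
/-- One step of the greedy deletion procedure: delete `r` from `P` if the result stays in `F`. -/
noncomputable def greedyStep {R : Type*} [DecidableEq R] (F : Set (Finset R))
    (P : Finset R) (r : R) : Finset R :=
  if P.erase r ∈ F then P.erase r else P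

lemma greedy_phase1 {R : Type*} [DecidableEq R] (F : Set (Finset R))
    (hup : ∀ P ∈ F, ∀ Q : Finset R, P ⊆ Q → Q ∈ F)
    (M : Finset R) (hMF : M ∈ F) :
    ∀ (l : List R) (P : Finset R), l.Nodup → M ⊆ P → l.toFinset = P \ M →
      l.foldl (greedyStep F) P = M := by
  intro l
  induction l with
  | nil =>
    intro P _ hMP h
    simp only [List.toFinset_nil] at h
    have : P ⊆ M := fun x hx => by
      by_contra hxM
      have : x ∈ P \ M := Finset.mem_sdiff.2 ⟨hx, hxM⟩
      rw [← h] at this; simp at this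
    simpa using Finset.Subset.antisymm this hMP
  | cons r t ih =>
    intro P hnd hMP h
    have hrt : r ∉ t := (List.nodup_cons.1 hnd).1
    have hr : r ∈ P \ M := by rw [← h]; simp
    obtain ⟨hrP, hrM⟩ := Finset.mem_sdiff.1 hr
    have hMsub : M ⊆ P.erase r := fun x hx =>
      Finset.mem_erase.2 ⟨fun hxr => hrM (hxr ▸ hx), hMP hx⟩
    have hFe : P.erase r ∈ F := hup M hMF _ hMsub
    have hstep : greedyStep F P r = P.erase r := by
      simp [greedyStep, hFe]
    simp only [List.foldl_cons, hstep]
    apply ih _ (List.nodup_cons.1 hnd).2 hMsub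
    have ht : t.toFinset = (insert r t.toFinset).erase r := by
      rw [Finset.erase_insert (by simpa using hrt)]
    rw [ht]
    have : insert r t.toFinset = P \ M := by simpa using h
    rw [this]
    ext x
    simp only [Finset.mem_erase, Finset.mem_sdiff]
    tauto

lemma greedy_phase2 {R : Type*} [DecidableEq R] (F : Set (Finset R))
    (M : Finset R) (hM : Minimal (· ∈ F) M) :
    ∀ l : List R, l.foldl (greedyStep F) M = M := by
  intro l
  induction l with
  | nil => rfl
  | cons r t ih =>
    have hstep : greedyStep F M r = M := by
      by_cases hrM : r ∈ M
      · have : M.erase r ∉ F := fun hF => by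
          have := hM.2 hF (Finset.erase_subset _ _)
          exact (Finset.notMem_erase r M) (this hrM)
        simp [greedyStep, this]
      · simp [greedyStep, Finset.erase_eq_of_notMem hrM]
    simp only [List.foldl_cons, hstep, ih]

theorem stmt6 {R : Type*} [Fintype R] [DecidableEq R]
    (F : Set (Finset R))
    (hup : ∀ P ∈ F, ∀ Q : Finset R, P ⊆ Q → Q ∈ F)
    (huniv : (Finset.univ : Finset R) ∈ F)
    (M : Finset R) (hM : Minimal (· ∈ F) M) :
    ∃ l : List R, l.Nodup ∧ (∀ r : R, r ∈ l) ∧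
      l.foldl (greedyStep F) Finset.univ = M := by
  refine ⟨(Finset.univ \ M).toList ++ M.toList, ?_, ?_, ?_⟩
  · refine List.Nodup.append (Finset.nodup_toList _) (Finset.nodup_toList _) ?_
    intro x hx hx'
    simp only [Finset.mem_toList, Finset.mem_sdiff] at hx hx'
    exact hx.2 hx'
  · intro r
    by_cases hr : r ∈ M
    · exact List.mem_append.2 (Or.inr (Finset.mem_toList.2 hr))
    · exact List.mem_append.2 (Or.inl (Finset.mem_toList.2 (by simp [hr])))
  · rw [List.foldl_append]
    rw [greedy_phase1 F hup M hM.1 _ _ (Finset.nodup_toList _) (Finset.subset_univ M)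
      (by simp)]
    exact greedy_phase2 F M hM _
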